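/- arXiv:1207.5523 — 2 statements merged into one kernel-verified Lean document; each statement's English description precedes it below -/
import Mathlib

section
/- Let z ∈ [−1, 1] and let ρ_w be the 4⊗4 Werner state ρ_w = ((4 − z) I + (4z − 1) F)/60 indexed by Fin 4 × Fin 4, reindexed as a matrix σ indexed by Fin 2 × (Fin 2 × Fin 4) via a bijection Fin 4 ≃ Fin 2 × Fin 2 applied to the first tensor factor (so that σ is viewed as a 2⊗8 state). Then the negativity N(σ) = ‖σ^{T_A}‖₁ − 1 (partial transposition over the Fin 2 factor) equals: (−2 − 7z)/10 if z ∈ [−1, −2/7); 0 if z ∈ [−2/7, 2/3]; and (−2 + 3z)/10 if z ∈ (2/3, 1]. -/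
open Matrix

noncomputable section

/-- Partial transpose with respect to the first (qubit) factor. -/
def ptA {B : Type*} (ρ : Matrix (Fin 2 × B) (Fin 2 × B) ℂ) :
    Matrix (Fin 2 × B) (Fin 2 × B) ℂ :=
  fun p q => ρ (q.1, p.2) (p.1, q.2)

/-- The flip (swap) operator on `ℂ⁴ ⊗ ℂ⁴`. -/
def flipOp : Matrix (Fin 4 × Fin 4) (Fin 4 × Fin 4) ℂ :=
  fun p q => if p.1 = q.2 ∧ p.2 = q.1 then 1 else 0

/-- The `4 ⊗ 4` Werner state with parameter `z`. -/
def werner4 (z : ℝ) : Matrix (Fin 4 × Fin 4) (Fin 4 × Fin 4) ℂ :=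
  ((((4 : ℂ) - (z : ℂ)) / 60) • 1) + ((((4 : ℂ) * (z : ℂ) - 1) / 60) • flipOp)

/-- The inverse of the bijection `Fin 4 ≃ Fin 2 × Fin 2`, `i ↦ (i / 2, i % 2)`. -/
def pair (a b : Fin 2) : Fin 4 := ⟨2 * a.val + b.val, by omega⟩

/-- The `4 ⊗ 4` Werner state seen as a `2 ⊗ 8` state, reindexing the first tensor
factor via `Fin 4 ≃ Fin 2 × Fin 2`, `i ↦ (i / 2, i % 2)`. -/
def wernerAs2x8 (z : ℝ) :
    Matrix (Fin 2 × (Fin 2 × Fin 4)) (Fin 2 × (Fin 2 × Fin 4)) ℂ :=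
  fun p q => werner4 z (pair p.1 p.2.1, p.2.2) (pair q.1 q.2.1, q.2.2)

/-! After reindexing, the partial transpose of the Werner state is `a • 1 + b • G` with
`a = (4 - z) / 60` and `b = (4z - 1) / 60`, where `G` is the partial transpose of the flip.
The 16 × 16 matrix `G` satisfies `G³ = 4G`, `tr G = 4` and `tr G² = 16`. So its spectrum lies in
`{-2, 0, 2}`, where every function agrees with its quadratic interpolant, and `tr f(G)` is fixed by
the traces of `1`, `G`, `G²`: it is `12 f(0) + 3 f(2) + f(-2)`. Taking `f x = |a + b x|`, the trace
norm is `12|a| + 3|a + 2b| + |a - 2b|`, and the three cases are the sign patterns of `a ± 2b`. -/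

section
variable {A : Type*} [Ring A] [StarRing A] [TopologicalSpace A] [Algebra ℝ A]
  [ContinuousFunctionalCalculus ℝ A IsSelfAdjoint]

open Polynomial in
theorem cfc_eq_of_pow_three_eq_sq_smul {a : A} (ha : IsSelfAdjoint a) {c : ℝ} (hc : c ≠ 0)
    (h : a ^ 3 = c ^ 2 • a) (f : ℝ → ℝ) :
    cfc f a = f 0 • 1 + ((f c - f (-c)) / (2 * c)) • a
      + ((f c + f (-c) - 2 * f 0) / (2 * c ^ 2)) • a ^ 2 := by
  have hspec : ∀ x ∈ spectrum ℝ a, x = 0 ∨ x = c ∨ x = -c := by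
    intro x hx
    have hcube : cfc (fun x : ℝ => x ^ 3 - c ^ 2 * x) a = cfc (fun _ : ℝ => (0 : ℝ)) a := by
      rw [cfc_sub _ _ a, cfc_pow_id a 3, cfc_const_mul_id _ a, cfc_const _ a, h, sub_self,
        map_zero]
    have hroot : x * ((x - c) * (x + c)) = 0 := by
      linear_combination (eqOn_of_cfc_eq_cfc hcube : (spectrum ℝ a).EqOn _ _) hx
    simpa [sub_eq_zero, add_eq_zero_iff_eq_neg] using hroot
  rw [cfc_congr (g := (C (f 0) + C ((f c - f (-c)) / (2 * c)) * X
      + C ((f c + f (-c) - 2 * f 0) / (2 * c ^ 2)) * X ^ 2).eval), cfc_polynomial _ a]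
  · simp only [map_add, map_mul, aeval_C, aeval_X, aeval_X_pow, Algebra.smul_def, mul_one]
  · intro x hx
    rcases hspec x hx with rfl | rfl | rfl <;> simp <;> field_simp <;> ring

end

theorem Matrix.IsHermitian.trace_cfc {n 𝕜 : Type*} [RCLike 𝕜] [Fintype n] [DecidableEq n]
    {A : Matrix n n 𝕜} (hA : A.IsHermitian) (f : ℝ → ℝ) :
    (cfc f A).trace = ∑ i, (f (hA.eigenvalues i) : 𝕜) := by
  rw [hA.cfc_eq, IsHermitian.cfc, Unitary.conjStarAlgAut_apply, trace_mul_cycle,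
    Unitary.coe_star_mul_self, one_mul, trace_diagonal]
  rfl

def flipAs2x8 : Matrix (Fin 2 × (Fin 2 × Fin 4)) (Fin 2 × (Fin 2 × Fin 4)) ℂ :=
  fun p q => flipOp (pair p.1 p.2.1, p.2.2) (pair q.1 q.2.1, q.2.2)

/-- `ptA flipAs2x8` with integer entries, so that its polynomial identities can be checked by
`decide`. -/
def flipPtAZ : Matrix (Fin 2 × (Fin 2 × Fin 4)) (Fin 2 × (Fin 2 × Fin 4)) ℤ :=
  fun p q => if pair q.1 p.2.1 = q.2.2 ∧ p.2.2 = pair p.1 q.2.1 then 1 else 0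

theorem flipPtAZ_pow_three : flipPtAZ ^ 3 = 4 • flipPtAZ := by decide

theorem trace_flipPtAZ : flipPtAZ.trace = 4 := by decide

theorem trace_flipPtAZ_sq : (flipPtAZ ^ 2).trace = 16 := by decide

theorem ptA_flipAs2x8_eq_map : ptA flipAs2x8 = (Int.castRingHom ℂ).mapMatrix flipPtAZ := by
  ext p q
  simp [ptA, flipAs2x8, flipOp, flipPtAZ, apply_ite]

theorem isHermitian_ptA_flipAs2x8 : (ptA flipAs2x8).IsHermitian := by
  ext p q
  simp only [conjTranspose_apply, ptA, flipAs2x8, flipOp]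
  split_ifs <;> simp_all [eq_comm]

theorem ptA_flipAs2x8_pow_three : ptA flipAs2x8 ^ 3 = (2 : ℝ) ^ 2 • ptA flipAs2x8 := by
  rw [ptA_flipAs2x8_eq_map, ← map_pow, flipPtAZ_pow_three, map_nsmul]
  norm_num [← Nat.cast_smul_eq_nsmul ℝ]

theorem trace_ptA_flipAs2x8 : (ptA flipAs2x8).trace = 4 := by
  rw [ptA_flipAs2x8_eq_map, RingHom.mapMatrix_apply, ← AddMonoidHom.map_trace, trace_flipPtAZ]
  simp

theorem trace_ptA_flipAs2x8_sq : (ptA flipAs2x8 ^ 2).trace = 16 := by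
  rw [ptA_flipAs2x8_eq_map, ← map_pow, RingHom.mapMatrix_apply, ← AddMonoidHom.map_trace,
    trace_flipPtAZ_sq]
  simp

theorem ptA_wernerAs2x8 (z : ℝ) :
    ptA (wernerAs2x8 z)
      = ((4 - z) / 60) • (1 : Matrix _ _ ℂ) + ((4 * z - 1) / 60) • ptA flipAs2x8 := by
  have hpair : ∀ p q : Fin 2 × (Fin 2 × Fin 4),
      (pair q.1 p.2.1, p.2.2) = (pair p.1 q.2.1, q.2.2) ↔ p = q := by decide
  ext p q
  simp only [ptA, wernerAs2x8, werner4, flipAs2x8, Matrix.add_apply, Matrix.smul_apply, one_apply,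
    hpair]
  split_ifs <;> simp [Complex.real_smul]

theorem sum_abs_eigenvalues_ptA_wernerAs2x8 (z : ℝ) (hH : (ptA (wernerAs2x8 z)).IsHermitian) :
    ∑ i, |hH.eigenvalues i| = (12 * |4 - z| + 3 * |2 + 7 * z| + |6 - 9 * z|) / 60 := by
  have hG : IsSelfAdjoint (ptA flipAs2x8) := isHermitian_ptA_flipAs2x8
  have hM : ptA (wernerAs2x8 z)
      = cfc (fun x => (4 - z) / 60 + (4 * z - 1) / 60 * x) (ptA flipAs2x8) := by
    rw [cfc_const_add _ _ _, cfc_const_mul_id _ _, Algebra.algebraMap_eq_smul_one,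
      ptA_wernerAs2x8]
  have key : ((∑ i, |hH.eigenvalues i| : ℝ) : ℂ)
      = (cfc (fun x => |(4 - z) / 60 + (4 * z - 1) / 60 * x|) (ptA flipAs2x8)).trace := by
    rw [cfc_comp' (fun x => |x|) _ _, ← hM, hH.trace_cfc]
    push_cast
    rfl
  rw [cfc_eq_of_pow_three_eq_sq_smul hG two_ne_zero ptA_flipAs2x8_pow_three] at key
  simp only [trace_add, trace_smul, trace_one, trace_ptA_flipAs2x8, trace_ptA_flipAs2x8_sq,
    Fintype.card_prod, Fintype.card_fin] at key
  have habs : ∀ t : ℝ, |t / 60| = |t| / 60 := fun t => by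
    rw [abs_div, abs_of_pos (by norm_num : (0 : ℝ) < 60)]
  rw [show (4 - z) / 60 + (4 * z - 1) / 60 * 0 = (4 - z) / 60 by ring,
    show (4 - z) / 60 + (4 * z - 1) / 60 * 2 = (2 + 7 * z) / 60 by ring,
    show (4 - z) / 60 + (4 * z - 1) / 60 * -2 = (6 - 9 * z) / 60 by ring, habs, habs, habs] at key
  apply Complex.ofReal_injective
  rw [key]
  simp only [Complex.real_smul]
  push_cast
  ring

/-- The negativity of the `4 ⊗ 4` Werner state viewed as a `2 ⊗ 8` state. -/
theorem negativity_werner_2x8 (z : ℝ) (hz : z ∈ Set.Icc (-1 : ℝ) 1)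
    (hH : (ptA (wernerAs2x8 z)).IsHermitian) :
    (∑ i, |hH.eigenvalues i|) - 1 =
      if z < -2/7 then (-2 - 7*z)/10
      else if z ≤ 2/3 then 0
      else (-2 + 3*z)/10 := by
  have h4 : 0 < 4 - z := by linarith [hz.2]
  rw [sum_abs_eigenvalues_ptA_wernerAs2x8, abs_of_pos h4]
  split_ifs with hneg hpos
  · rw [abs_of_neg (by linarith), abs_of_pos (by linarith)]
    ring
  · rw [abs_of_nonneg (by linarith), abs_of_nonneg (by linarith)]
    ring
  · rw [abs_of_pos (by linarith), abs_of_neg (by linarith)]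
    ring
end
end

section
/- Let z ∈ [−1, 1] and let σ be the 4⊗4 Werner state ρ_w = ((4 − z) I + (4z − 1) F)/60 reindexed as a 2⊗8 density matrix via a bijection Fin 4 ≃ Fin 2 × Fin 2 on the first tensor factor. Then the geometric discord of σ equals D(σ) = ((4z − 1)/15)². -/
open Matrix
open scoped Kronecker

noncomputable section

/-- The squared Frobenius (Hilbert-Schmidt) norm `‖X‖_F² = trace (Xᴴ X)`. -/
def frobSq {m : Type*} [Fintype m] (X : Matrix m m ℂ) : ℝ :=
  (Xᴴ * X).trace.re

/-- The post-measurement state after a von Neumann measurement `{P, I - P}` on the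
qubit subsystem `A`. -/
def measured {B : Type*} [Fintype B] [DecidableEq B] (P : Matrix (Fin 2) (Fin 2) ℂ)
    (ρ : Matrix (Fin 2 × B) (Fin 2 × B) ℂ) :
    Matrix (Fin 2 × B) (Fin 2 × B) ℂ :=
  (P ⊗ₖ (1 : Matrix B B ℂ)) * ρ * (P ⊗ₖ (1 : Matrix B B ℂ)) +
    ((1 - P) ⊗ₖ (1 : Matrix B B ℂ)) * ρ * ((1 - P) ⊗ₖ (1 : Matrix B B ℂ))

/-- The (normalized) geometric discord of a `2 ⊗ n` state. -/
def geomDiscord {B : Type*} [Fintype B] [DecidableEq B]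
    (ρ : Matrix (Fin 2 × B) (Fin 2 × B) ℂ) : ℝ :=
  2 * sInf {r : ℝ | ∃ P : Matrix (Fin 2) (Fin 2) ℂ,
    P * P = P ∧ Pᴴ = P ∧ P.trace = 1 ∧ r = frobSq (ρ - measured P ρ)}

/-! With `M = P ⊗ 1` and `N = 1 - M`, the state minus its measured version is the off-diagonal
part `MρN + NρM`, whose squared Frobenius norm is `2 tr(MρNρ)`. For `ρ = a 1 + b F` the identity
part drops out since `MN = 0`, leaving `b² tr(MFNF)`. Conjugating by the flip moves `N` to the
other tensor factor, so `tr(MFNF) = tr M' · tr N' = 2 · 2` where `M = M' ⊗ 1`, `N = N' ⊗ 1` on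
`ℂ⁴ ⊗ ℂ⁴`: every projection gives the same value `(4z - 1)² / 450`, and the infimum is that value. -/

theorem Matrix.sub_kronecker {l m n p α : Type*} [Ring α] (A₁ A₂ : Matrix l m α)
    (B : Matrix n p α) : (A₁ - A₂) ⊗ₖ B = A₁ ⊗ₖ B - A₂ ⊗ₖ B := by
  ext; simp [sub_mul]

theorem Matrix.trace_submatrix_equiv {m n R : Type*} [Fintype m] [Fintype n] [AddCommMonoid R]
    (A : Matrix n n R) (e : m ≃ n) : (A.submatrix e e).trace = A.trace :=
  e.sum_comp fun i => A i i

theorem Matrix.kronecker_one_mul_self {m n R : Type*} [Fintype m] [Fintype n] [DecidableEq n]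
    [CommSemiring R] {P : Matrix m m R} (hP : P * P = P) :
    (P ⊗ₖ (1 : Matrix n n R)) * (P ⊗ₖ 1) = P ⊗ₖ 1 := by
  rw [← mul_kronecker_mul, hP, Matrix.one_mul]

section Pinching

variable {n : Type*} [Fintype n] [DecidableEq n]

lemma sub_pinching_eq (ρ M : Matrix n n ℂ) :
    ρ - (M * ρ * M + (1 - M) * ρ * (1 - M)) = M * ρ * (1 - M) + (1 - M) * ρ * M := by
  noncomm_ring

lemma trace_offDiag_mul_self {ρ M : Matrix n n ℂ} (hMM : M * M = M) :
    ((M * ρ * (1 - M) + (1 - M) * ρ * M) * (M * ρ * (1 - M) + (1 - M) * ρ * M)).trace =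
      2 * (M * ρ * (1 - M) * ρ).trace := by
  set N := 1 - M
  have hMN : M * N = 0 := by simp only [N, mul_sub, mul_one, hMM, sub_self]
  have hNM : N * M = 0 := by simp only [N, sub_mul, one_mul, hMM, sub_self]
  have hNN : N * N = N := by
    simp only [N, sub_mul, mul_sub, one_mul, mul_one, hMM, sub_self, sub_zero]
  have expand : (M * ρ * N + N * ρ * M) * (M * ρ * N + N * ρ * M) =
      M * ρ * (N * M) * ρ * N + M * ρ * (N * N) * ρ * M +
        N * ρ * (M * M) * ρ * N + N * ρ * (M * N) * ρ * M := by
    noncomm_ring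
  have cyc_M : (M * ρ * N * ρ * M).trace = (M * ρ * N * ρ).trace := by
    rw [trace_mul_comm, ← Matrix.mul_assoc, ← Matrix.mul_assoc, ← Matrix.mul_assoc, hMM]
  have cyc_N : (N * ρ * M * ρ * N).trace = (M * ρ * N * ρ).trace := by
    rw [trace_mul_comm, ← Matrix.mul_assoc, ← Matrix.mul_assoc, ← Matrix.mul_assoc, hNN,
      Matrix.mul_assoc, trace_mul_comm, ← Matrix.mul_assoc]
  rw [expand, hMN, hNM, hNN, hMM]
  simp only [Matrix.mul_zero, Matrix.zero_mul, zero_add, add_zero, trace_add, cyc_M, cyc_N]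
  ring

lemma trace_pinching_smul_one_add_smul {M : Matrix n n ℂ} (hMM : M * M = M)
    (a b : ℂ) (G : Matrix n n ℂ) :
    (M * (a • 1 + b • G) * (1 - M) * (a • 1 + b • G)).trace =
      b ^ 2 * (M * G * (1 - M) * G).trace := by
  have hMN : M * (1 - M) = 0 := by simp only [mul_sub, mul_one, hMM, sub_self]
  have hNM : (1 - M) * M = 0 := by simp only [sub_mul, one_mul, hMM, sub_self]
  have cross : M * (a • 1 + b • G) * (1 - M) = b • (M * G * (1 - M)) := by
    simp only [Matrix.mul_add, Matrix.add_mul, Matrix.mul_smul, Matrix.smul_mul,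
      Matrix.mul_one, hMN, smul_zero, zero_add]
  have vanish : (M * G * (1 - M)).trace = 0 := by
    rw [trace_mul_comm, ← Matrix.mul_assoc, hNM, Matrix.zero_mul, trace_zero]
  rw [cross]
  simp only [Matrix.mul_add, Matrix.smul_mul, Matrix.mul_smul, Matrix.mul_one, trace_add,
    trace_smul, vanish, smul_eq_mul]
  ring

end Pinching

lemma frobSq_sub_measured {B : Type*} [Fintype B] [DecidableEq B]
    {ρ : Matrix (Fin 2 × B) (Fin 2 × B) ℂ} (hρ : ρᴴ = ρ) {P : Matrix (Fin 2) (Fin 2) ℂ}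
    (hP2 : P * P = P) (hPH : Pᴴ = P) :
    frobSq (ρ - measured P ρ) = 2 * ((P ⊗ₖ 1) * ρ * (1 - P ⊗ₖ 1) * ρ).trace.re := by
  set M : Matrix (Fin 2 × B) (Fin 2 × B) ℂ := P ⊗ₖ 1
  have hMM : M * M = M := kronecker_one_mul_self hP2
  have hMH : Mᴴ = M := by rw [conjTranspose_kronecker, hPH, conjTranspose_one]
  have hmeasured : measured P ρ = M * ρ * M + (1 - M) * ρ * (1 - M) := by
    rw [measured, sub_kronecker, one_kronecker_one]
  have hX : (M * ρ * (1 - M) + (1 - M) * ρ * M)ᴴ = M * ρ * (1 - M) + (1 - M) * ρ * M := by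
    simp only [conjTranspose_add, conjTranspose_mul, conjTranspose_sub, conjTranspose_one,
      hMH, hρ, Matrix.mul_assoc, add_comm]
  rw [frobSq, hmeasured, sub_pinching_eq, hX, trace_offDiag_mul_self hMM]
  simp

lemma geomDiscord_eq_of_frobSq_sub_measured_eq {B : Type*} [Fintype B] [DecidableEq B]
    {ρ : Matrix (Fin 2 × B) (Fin 2 × B) ℂ} {c : ℝ}
    (h : ∀ P : Matrix (Fin 2) (Fin 2) ℂ, P * P = P → Pᴴ = P → P.trace = 1 →
      frobSq (ρ - measured P ρ) = c) :
    geomDiscord ρ = 2 * c := by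
  let P₀ : Matrix (Fin 2) (Fin 2) ℂ := diagonal ![1, 0]
  have hP₀ : P₀ * P₀ = P₀ ∧ P₀ᴴ = P₀ ∧ P₀.trace = 1 := by
    refine ⟨?_, ?_, ?_⟩ <;> simp [P₀, trace_diagonal]
  have hset : {r : ℝ | ∃ P : Matrix (Fin 2) (Fin 2) ℂ,
      P * P = P ∧ Pᴴ = P ∧ P.trace = 1 ∧ r = frobSq (ρ - measured P ρ)} = {c} := by
    ext r
    constructor
    · rintro ⟨P, hP2, hPH, hPt, rfl⟩
      exact h P hP2 hPH hPt
    · rintro rfl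
      exact ⟨P₀, hP₀.1, hP₀.2.1, hP₀.2.2, (h P₀ hP₀.1 hP₀.2.1 hP₀.2.2).symm⟩
  rw [geomDiscord, hset, csInf_singleton]

lemma trace_kronecker_one_mul_swap_mul {ι R : Type*} [Fintype ι] [DecidableEq ι] [CommRing R]
    (X Y : Matrix ι ι R) :
    ((X ⊗ₖ 1) * (Equiv.prodComm ι ι).toPEquiv.toMatrix * (Y ⊗ₖ 1) *
      (Equiv.prodComm ι ι).toPEquiv.toMatrix).trace = X.trace * Y.trace := by
  have conj : (Equiv.prodComm ι ι).toPEquiv.toMatrix * (Y ⊗ₖ 1) *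
      (Equiv.prodComm ι ι).toPEquiv.toMatrix = (1 : Matrix ι ι R) ⊗ₖ Y := by
    ext ⟨i, j⟩ ⟨k, l⟩
    simp [PEquiv.toMatrix_toPEquiv_mul, PEquiv.mul_toMatrix_toPEquiv, one_apply, mul_comm]
  rw [Matrix.mul_assoc, Matrix.mul_assoc, ← Matrix.mul_assoc (Equiv.prodComm ι ι).toPEquiv.toMatrix,
    conj, ← mul_kronecker_mul, Matrix.mul_one, Matrix.one_mul, trace_kronecker]

lemma flipOp_eq_toMatrix : flipOp = (Equiv.prodComm (Fin 4) (Fin 4)).toPEquiv.toMatrix := by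
  ext p q
  simp [flipOp, PEquiv.toMatrix_apply, Prod.ext_iff, eq_comm, and_comm]

def pairEquiv : Fin 2 × Fin 2 ≃ Fin 4 :=
  Equiv.ofBijective (fun p => pair p.1 p.2) (by decide)

def splitFirst : Fin 2 × (Fin 2 × Fin 4) ≃ Fin 4 × Fin 4 :=
  (Equiv.prodAssoc _ _ _).symm.trans (pairEquiv.prodCongr (Equiv.refl _))

lemma wernerAs2x8_eq_submatrix (z : ℝ) :
    wernerAs2x8 z = (werner4 z).submatrix splitFirst splitFirst := rfl

lemma wernerAs2x8_eq_smul_one_add_smul_flipOp (z : ℝ) :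
    wernerAs2x8 z = (((4 : ℂ) - z) / 60) • 1 +
      (((4 : ℂ) * z - 1) / 60) • flipOp.submatrix splitFirst splitFirst := by
  simp only [wernerAs2x8_eq_submatrix, werner4, submatrix_add, submatrix_smul, Pi.add_apply,
    Pi.smul_apply, submatrix_one_equiv]

lemma wernerAs2x8_conjTranspose (z : ℝ) : (wernerAs2x8 z)ᴴ = wernerAs2x8 z := by
  ext p q
  simp [wernerAs2x8, werner4, flipOp, one_apply, eq_comm, and_comm, apply_ite (starRingEnd ℂ),
    map_div₀, map_ofNat, Complex.conj_ofReal]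

lemma kronecker_one_eq_submatrix_splitFirst (P : Matrix (Fin 2) (Fin 2) ℂ) :
    P ⊗ₖ (1 : Matrix (Fin 2 × Fin 4) (Fin 2 × Fin 4) ℂ) =
      ((P ⊗ₖ (1 : Matrix (Fin 2) (Fin 2) ℂ)).submatrix pairEquiv.symm pairEquiv.symm ⊗ₖ
        (1 : Matrix (Fin 4) (Fin 4) ℂ)).submatrix splitFirst splitFirst := by
  ext ⟨a, b, k⟩ ⟨a', b', k'⟩
  simp [splitFirst, one_apply, Prod.ext_iff, ← ite_and, and_comm]

lemma trace_kronecker_one_mul_flipOp_mul {P : Matrix (Fin 2) (Fin 2) ℂ} (hPt : P.trace = 1) :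
    ((P ⊗ₖ 1) * flipOp.submatrix splitFirst splitFirst * (1 - P ⊗ₖ 1) *
      flipOp.submatrix splitFirst splitFirst).trace = 4 := by
  set X := (P ⊗ₖ (1 : Matrix (Fin 2) (Fin 2) ℂ)).submatrix pairEquiv.symm pairEquiv.symm
  have hX : X.trace = 2 := by
    rw [trace_submatrix_equiv, trace_kronecker, hPt, trace_one]; norm_num
  have hN : 1 - P ⊗ₖ (1 : Matrix (Fin 2 × Fin 4) (Fin 2 × Fin 4) ℂ) =
      ((1 - X) ⊗ₖ 1).submatrix splitFirst splitFirst := by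
    rw [kronecker_one_eq_submatrix_splitFirst, sub_kronecker, one_kronecker_one,
      ← submatrix_one_equiv splitFirst]
    rfl
  rw [hN, kronecker_one_eq_submatrix_splitFirst, submatrix_mul_equiv, submatrix_mul_equiv,
    submatrix_mul_equiv, trace_submatrix_equiv, flipOp_eq_toMatrix,
    trace_kronecker_one_mul_swap_mul, hX, trace_sub, trace_one, hX]
  norm_num

lemma frobSq_wernerAs2x8_sub_measured (z : ℝ) {P : Matrix (Fin 2) (Fin 2) ℂ}
    (hP2 : P * P = P) (hPH : Pᴴ = P) (hPt : P.trace = 1) :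
    frobSq (wernerAs2x8 z - measured P (wernerAs2x8 z)) = (4 * z - 1) ^ 2 / 450 := by
  rw [frobSq_sub_measured (wernerAs2x8_conjTranspose z) hP2 hPH,
    wernerAs2x8_eq_smul_one_add_smul_flipOp,
    trace_pinching_smul_one_add_smul (kronecker_one_mul_self hP2),
    trace_kronecker_one_mul_flipOp_mul hPt]
  norm_cast
  ring

theorem geomDiscord_werner_2x8_general (z : ℝ) :
    geomDiscord (wernerAs2x8 z) = ((4*z - 1)/15) ^ 2 := by
  rw [geomDiscord_eq_of_frobSq_sub_measured_eq fun _ hP2 hPH hPt =>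
    frobSq_wernerAs2x8_sub_measured z hP2 hPH hPt]
  ring

/-- The geometric discord of the `4 ⊗ 4` Werner state viewed as a `2 ⊗ 8` state
equals `((4z - 1)/15)²`. -/
theorem geomDiscord_werner_2x8 (z : ℝ) (hz : z ∈ Set.Icc (-1 : ℝ) 1) :
    geomDiscord (wernerAs2x8 z) = ((4*z - 1)/15) ^ 2 :=
  geomDiscord_werner_2x8_general z
end
end
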